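/- arXiv:1003.4721 — 4 statements merged into one kernel-verified Lean document; each statement's English description precedes it below -/
import Mathlib

section
/- Integral representation of high derivatives of u/x near a boundary zero (the key identity in the proof of the higher-order Hardy inequality). Let s ≥ 0 be an integer, let u : [0,1] → ℝ be of class C^{s+1} with u(0) = 0. Then for every x ∈ (0,1], the s-th derivative of the function y ↦ u(y)/y, evaluated at x, equals x^{−(s+1)} · ∫₀^x y^s u^{(s+1)}(y) dy. In particular |(u/·)^{(s)}(x)| ≤ x^{−1} ∫₀^x |u^{(s+1)}(y)| dy for all x ∈ (0,1]. -/
/-! Induction on `s`. With `I_s(x) = ∫₀^x y^s u^{(s+1)}(y) dy`, the quotient rule gives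
`(I_s / x^{s+1})' = (x^{s+1} u^{(s+1)}(x) - (s+1) I_s(x)) / x^{s+2}`, and integrating
`y^{s+1} u^{(s+2)}` by parts shows that the numerator is `I_{s+1}(x)`. The base case is the
fundamental theorem of calculus together with `u 0 = 0`; the bound follows from `y^s ≤ x^s`. -/

open Set MeasureTheory intervalIntegral

theorem ContDiffOn.hasDerivWithinAt_iteratedDerivWithin {𝕜 F : Type*}
    [NontriviallyNormedField 𝕜] [NormedAddCommGroup F] [NormedSpace 𝕜 F] {n : WithTop ℕ∞}
    {f : 𝕜 → F} {s : Set 𝕜} {k : ℕ} {x : 𝕜} (hf : ContDiffOn 𝕜 n f s) (hk : k < n)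
    (hs : UniqueDiffOn 𝕜 s) (hx : x ∈ s) :
    HasDerivWithinAt (iteratedDerivWithin k f s) (iteratedDerivWithin (k + 1) f s x) s x := by
  rw [iteratedDerivWithin_succ]
  exact (hf.differentiableOn_iteratedDerivWithin hk hs x hx).hasDerivWithinAt

theorem ContinuousOn.integral_hasDerivWithinAt_Icc {f : ℝ → ℝ} {a b x : ℝ}
    (hf : ContinuousOn f (Icc a b)) (hx : x ∈ Icc a b) :
    HasDerivWithinAt (fun z => ∫ t in a..z, f t) (f x) (Icc a b) x := by
  -- supplies the `FTCFilter x (𝓝[Icc a b] x) (𝓝[Icc a b] x)` instance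
  have := Fact.mk hx
  exact integral_hasDerivWithinAt_right
    ((hf.mono (Icc_subset_Icc le_rfl hx.2)).intervalIntegrable_of_Icc hx.1)
    (hf.stronglyMeasurableAtFilter_nhdsWithin measurableSet_Icc x) (hf.continuousWithinAt hx)

theorem integral_eq_sub_of_hasDerivWithinAt_Icc {f f' : ℝ → ℝ} {a b : ℝ} (hab : a ≤ b)
    (hf : ∀ y ∈ Icc a b, HasDerivWithinAt f (f' y) (Icc a b) y)
    (hf' : IntervalIntegrable f' volume a b) :
    ∫ y in a..b, f' y = f b - f a :=
  integral_eq_sub_of_hasDerivAt_of_le hab (fun y hy => (hf y hy).continuousWithinAt)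
    (fun y hy => (hf y (Ioo_subset_Icc_self hy)).hasDerivAt (Icc_mem_nhds hy.1 hy.2)) hf'

theorem integral_pow_succ_mul_eq {φ φ' : ℝ → ℝ} {x : ℝ}
    (hφ : ∀ y ∈ uIcc 0 x, HasDerivWithinAt φ (φ' y) (uIcc 0 x) y)
    (hφ' : IntervalIntegrable φ' volume 0 x) (s : ℕ) :
    ∫ y in (0:ℝ)..x, y ^ (s + 1) * φ' y
      = x ^ (s + 1) * φ x - (s + 1) * ∫ y in (0:ℝ)..x, y ^ s * φ y := by
  have hpow : ∀ y ∈ uIcc 0 x,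
      HasDerivWithinAt (fun y : ℝ => y ^ (s + 1)) ((s + 1) * y ^ s) (uIcc 0 x) y := fun y _ => by
    simpa using (hasDerivAt_pow (s + 1) y).hasDerivWithinAt
  have hpow' : IntervalIntegrable (fun y : ℝ => (s + 1) * y ^ s) volume 0 x :=
    (continuous_const.mul (continuous_pow s)).intervalIntegrable _ _
  rw [integral_mul_deriv_eq_deriv_mul_of_hasDerivWithinAt hpow hφ hpow' hφ',
    ← intervalIntegral.integral_const_mul]
  simp [mul_assoc]

theorem abs_integral_pow_mul_le {f : ℝ → ℝ} {x : ℝ} (hx : 0 ≤ x)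
    (hf : IntervalIntegrable f volume 0 x) (s : ℕ) :
    |∫ y in (0:ℝ)..x, y ^ s * f y| ≤ x ^ s * ∫ y in (0:ℝ)..x, |f y| := by
  rw [← intervalIntegral.integral_const_mul]
  refine (abs_integral_le_integral_abs hx).trans (integral_mono_on hx ?_ ?_ fun y hy => ?_)
  · exact (hf.continuousOn_mul (continuousOn_pow s)).abs
  · exact hf.abs.const_mul _
  · rw [abs_mul, abs_of_nonneg (pow_nonneg hy.1 s)]
    exact mul_le_mul_of_nonneg_right (pow_le_pow_left₀ hy.1 hy.2 s) (abs_nonneg _)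

theorem hasDerivWithinAt_inv_pow_mul_integral {φ φ' : ℝ → ℝ} {a x : ℝ}
    (hφ : ∀ y ∈ Icc 0 a, HasDerivWithinAt φ (φ' y) (Icc 0 a) y)
    (hφ' : ContinuousOn φ' (Icc 0 a)) (s : ℕ) (hx : x ∈ Ioc 0 a) :
    HasDerivWithinAt (fun z => (z ^ (s + 1))⁻¹ * ∫ y in (0:ℝ)..z, y ^ s * φ y)
      ((x ^ (s + 2))⁻¹ * ∫ y in (0:ℝ)..x, y ^ (s + 1) * φ' y) (Icc 0 a) x := by
  have hx0 : x ≠ 0 := hx.1.ne'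
  have hsub : uIcc 0 x ⊆ Icc 0 a := by
    rw [uIcc_of_le hx.1.le]
    exact Icc_subset_Icc le_rfl hx.2
  have hinv : HasDerivAt (fun z : ℝ => (z ^ (s + 1))⁻¹)
      (-((s + 1 : ℕ) * x ^ s) / (x ^ (s + 1)) ^ 2) x :=
    (hasDerivAt_pow (s + 1) x).fun_inv (pow_ne_zero _ hx0)
  have hint : HasDerivWithinAt (fun z => ∫ y in (0:ℝ)..z, y ^ s * φ y) (x ^ s * φ x)
      (Icc 0 a) x :=
    ContinuousOn.integral_hasDerivWithinAt_Icc
      ((continuousOn_pow s).mul fun y hy => (hφ y hy).continuousWithinAt) (Ioc_subset_Icc_self hx)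
  have hparts := integral_pow_succ_mul_eq (fun y hy => (hφ y (hsub hy)).mono hsub)
    ((hφ'.mono hsub).intervalIntegrable) s
  refine (hinv.hasDerivWithinAt.mul hint).congr_deriv ?_
  rw [hparts]
  field_simp
  push_cast
  ring

theorem iteratedDerivWithin_div_id_eq {u : ℝ → ℝ} {a : ℝ} (hu0 : u 0 = 0) (s : ℕ)
    (hu : ContDiffOn ℝ (s + 1 : ℕ) u (Icc 0 a)) {x : ℝ} (hx : x ∈ Ioc 0 a) :
    iteratedDerivWithin s (fun y => u y / y) (Ioc 0 a) x =
      (x ^ (s + 1))⁻¹ *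
        ∫ y in (0:ℝ)..x, y ^ s * iteratedDerivWithin (s + 1) u (Icc 0 a) y := by
  have hT : UniqueDiffOn ℝ (Icc 0 a) := uniqueDiffOn_Icc (hx.1.trans_le hx.2)
  have hderiv (k : ℕ) (hk : ContDiffOn ℝ (k + 1 : ℕ) u (Icc 0 a)) (y : ℝ)
      (hy : y ∈ Icc 0 a) :
      HasDerivWithinAt (iteratedDerivWithin k u (Icc 0 a))
        (iteratedDerivWithin (k + 1) u (Icc 0 a) y) (Icc 0 a) y :=
    hk.hasDerivWithinAt_iteratedDerivWithin (by norm_cast; omega) hT hy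
  have hcont (k : ℕ) (hk : ContDiffOn ℝ (k + 1 : ℕ) u (Icc 0 a)) :
      ContinuousOn (iteratedDerivWithin (k + 1) u (Icc 0 a)) (Icc 0 a) :=
    hk.continuousOn_iteratedDerivWithin le_rfl hT
  induction s generalizing x with
  | zero =>
    have hsub : Icc 0 x ⊆ Icc 0 a := Icc_subset_Icc le_rfl hx.2
    have hFTC := integral_eq_sub_of_hasDerivWithinAt_Icc hx.1.le
      (fun y hy => (hderiv 0 hu y (hsub hy)).mono hsub)
      (((hcont 0 hu).mono hsub).intervalIntegrable_of_Icc hx.1.le)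
    simp only [iteratedDerivWithin_zero, zero_add, pow_zero, one_mul, pow_one] at hFTC ⊢
    rw [hFTC, hu0, sub_zero, div_eq_inv_mul]
  | succ s ih =>
    have hu' : ContDiffOn ℝ (s + 1 : ℕ) u (Icc 0 a) := hu.of_le (by norm_cast; omega)
    rw [iteratedDerivWithin_succ, derivWithin_congr (fun z hz => ih hu' hz) (ih hu' hx)]
    exact ((hasDerivWithinAt_inv_pow_mul_integral (hderiv _ hu) (hcont _ hu) s hx).mono
      Ioc_subset_Icc_self).derivWithin (uniqueDiffOn_Ioc 0 a x hx)

/-- Integral representation of high derivatives of `u/x` near a boundary zero: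
if `u` is `C^{s+1}` on `[0,1]` with `u 0 = 0`, then for `x ∈ (0,1]` the `s`-th
derivative of `y ↦ u y / y` at `x` equals `x^{-(s+1)} ∫₀^x y^s u^{(s+1)}(y) dy`,
and in particular `|(u/·)^{(s)}(x)| ≤ x⁻¹ ∫₀^x |u^{(s+1)}(y)| dy`. -/
theorem derivative_representation (s : ℕ) (u : ℝ → ℝ)
    (hu : ContDiffOn ℝ ((s : ℕ∞) + 1) u (Icc (0:ℝ) 1)) (hu0 : u 0 = 0) :
    ∀ x ∈ Ioc (0:ℝ) 1,
      iteratedDerivWithin s (fun y => u y / y) (Ioc (0:ℝ) 1) x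
          = (x ^ (s+1))⁻¹ *
              ∫ y in (0:ℝ)..x, y ^ s * iteratedDerivWithin (s+1) u (Icc (0:ℝ) 1) y
        ∧ |iteratedDerivWithin s (fun y => u y / y) (Ioc (0:ℝ) 1) x|
            ≤ x⁻¹ * ∫ y in (0:ℝ)..x, |iteratedDerivWithin (s+1) u (Icc (0:ℝ) 1) y| := by
  intro x hx
  have hx0 : 0 < x := hx.1
  have hu' : ContDiffOn ℝ (s + 1 : ℕ) u (Icc 0 1) := by exact_mod_cast hu
  have hrep := iteratedDerivWithin_div_id_eq hu0 s hu' hx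
  refine ⟨hrep, ?_⟩
  set φ := iteratedDerivWithin (s + 1) u (Icc 0 1)
  have hint : IntervalIntegrable φ volume 0 x :=
    ((hu'.continuousOn_iteratedDerivWithin le_rfl (uniqueDiffOn_Icc one_pos)).mono
      (Icc_subset_Icc le_rfl hx.2)).intervalIntegrable_of_Icc hx0.le
  calc |iteratedDerivWithin s (fun y => u y / y) (Ioc 0 1) x|
      = (x ^ (s + 1))⁻¹ * |∫ y in (0:ℝ)..x, y ^ s * φ y| := by
        rw [hrep, abs_mul, abs_of_pos (by positivity)]
    _ ≤ (x ^ (s + 1))⁻¹ * (x ^ s * ∫ y in (0:ℝ)..x, |φ y|) := by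
        gcongr
        exact abs_integral_pow_mul_le hx0.le hint s
    _ = x⁻¹ * ∫ y in (0:ℝ)..x, |φ y| := by
        field_simp
        ring
end

section
/- The curl–curl structure identity (Lemma 5.1). Let η : ℝ × ℝ³ → ℝ³ be of class C³ with Dη(t,x) (the spatial Jacobian matrix) invertible at every point of an open set, let v = ∂_t η, J = det Dη, a = adjugate(Dη), and δ the Kronecker symbol. Then at every such (t,x), for each k ∈ {1,2,3} (with summation of repeated indices over {1,2,3}): ∂_j(∂_t a^k_i) · a^j_i = [curl curl v]^k + v^r,_{s j} · ( J^{−1} [ a^s_r a^k_i − a^s_i a^k_r ] a^j_i − [ δ^s_r δ^k_i − δ^s_i δ^k_r ] δ^j_i ) + v^r,_s · ( J^{−1} [ a^s_r a^k_i − a^s_i a^k_r ] ),_j · a^j_i, where [curl curl v]^k = ∂_k(div v) − Δ v^k, all spatial derivatives are taken at fixed t, F,_j = ∂F/∂x_j and F,_{s j} = ∂²F/∂x_s∂x_j. -/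
/-! Since `adjugate M = det M • M⁻¹`, the time derivative of `a = adjugate Dη` is
`∂ₜ a^k_i = v^r,_s A^{sk}_{ri}` with `A^{sk}_{ri} = J⁻¹ (a^s_r a^k_i - a^s_i a^k_r)`; for `3 × 3`
matrices this is checked on the quadratic cofactor formula, after commuting `∂ₜ` with `∂_s`
(`∂ₜ Dη = Dv`). Applying `∂_j` by the product rule and contracting with `a^j_i` gives the two
`v`-terms, and the Kronecker terms subtracted from the first one contract to
`∂_k (div v) - Δ v^k = [curl curl v]^k`, which is added back. -/

open Matrix

/-- Spatial Jacobian matrix of a map `ℝ³ → ℝ³`, entries `(Dη)^r_s = ∂η^r/∂x_s`. -/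
noncomputable def sjac (η : (Fin 3 → ℝ) → (Fin 3 → ℝ)) (x : Fin 3 → ℝ) :
    Matrix (Fin 3) (Fin 3) ℝ :=
  Matrix.of fun r s => fderiv ℝ (fun y => η y r) x (Pi.single s 1)

/-- First-order spatial partial derivative `F,_j = ∂F/∂x_j`. -/
noncomputable def p1 (j : Fin 3) (f : (Fin 3 → ℝ) → ℝ) : (Fin 3 → ℝ) → ℝ :=
  fun x => fderiv ℝ f x (Pi.single j 1)

/-- Lagrangian velocity `v = ∂ₜη`. -/
noncomputable def vel (η : ℝ → (Fin 3 → ℝ) → (Fin 3 → ℝ)) (t : ℝ) (x : Fin 3 → ℝ)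
    (r : Fin 3) : ℝ :=
  deriv (fun s => η s x r) t

def kd (i j : Fin 3) : ℝ := if i = j then 1 else 0

namespace Matrix

variable {n R : Type*} [Fintype n] [DecidableEq n]

/-- For invertible `M`, the coefficient of `dM r s` in `d (adjugate M) k i`: differentiating
`adjugate M = det M • M⁻¹` gives `d adj M = (det M)⁻¹ (tr (adj M dM) adj M - adj M dM adj M)`. -/
def adjugatePartial [Field R] (M : Matrix n n R) (k i r s : n) : R :=
  M.det⁻¹ * (M.adjugate s r * M.adjugate k i - M.adjugate s i * M.adjugate k r)

lemma adjugate_fin_three_apply_cyclic [CommRing R] (M : Matrix (Fin 3) (Fin 3) R) (k i : Fin 3) :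
    M.adjugate k i =
      M (i + 1) (k + 1) * M (i + 2) (k + 2) - M (i + 1) (k + 2) * M (i + 2) (k + 1) := by
  fin_cases k <;> fin_cases i <;>
    simp only [adjugate_fin_three, of_apply, cons_val', cons_val, cons_val_fin_one, cons_val_zero,
      cons_val_one, Fin.isValue, Fin.mk_one, Fin.zero_eta, Fin.reduceAdd, Fin.reduceFinMk,
      zero_add] <;>
    ring

lemma sum_mul_adjugatePartial_fin_three [Field R] (M B : Matrix (Fin 3) (Fin 3) R) (h : M.det ≠ 0)
    (k i : Fin 3) :
    ∑ r, ∑ s, B r s * M.adjugatePartial k i r s =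
      B (i + 1) (k + 1) * M (i + 2) (k + 2) + M (i + 1) (k + 1) * B (i + 2) (k + 2)
        - (B (i + 1) (k + 2) * M (i + 2) (k + 1) + M (i + 1) (k + 2) * B (i + 2) (k + 1)) := by
  have hdet := det_fin_three M
  fin_cases k <;> fin_cases i <;>
  · simp only [adjugatePartial, adjugate_fin_three, Fin.sum_univ_three, of_apply, cons_val',
      cons_val, cons_val_fin_one, cons_val_zero, cons_val_one, Fin.isValue, Fin.mk_one,
      Fin.zero_eta, Fin.reduceAdd, Fin.reduceFinMk, add_zero, zero_add, mul_zero, sub_self]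
    field_simp
    rw [hdet]
    ring

end Matrix

section MatrixCalculus

open Matrix

variable {𝕜 E n : Type*} [NontriviallyNormedField 𝕜] [NormedAddCommGroup E] [NormedSpace 𝕜 E]
  [Fintype n] [DecidableEq n] {M : E → Matrix n n 𝕜} {x : E}

lemma DifferentiableAt.matrix_det (hM : ∀ i j, DifferentiableAt 𝕜 (fun y => M y i j) x) :
    DifferentiableAt 𝕜 (fun y => (M y).det) x := by
  simp only [det_apply, Units.smul_def]
  fun_prop

lemma DifferentiableAt.matrix_adjugate (hM : ∀ i j, DifferentiableAt 𝕜 (fun y => M y i j) x)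
    (k i : n) : DifferentiableAt 𝕜 (fun y => (M y).adjugate k i) x := by
  simp only [adjugate_apply]
  refine DifferentiableAt.matrix_det fun r s => ?_
  simp only [updateRow_apply]
  split_ifs
  · exact differentiableAt_const _
  · exact hM r s

lemma DifferentiableAt.matrix_adjugatePartial
    (hM : ∀ i j, DifferentiableAt 𝕜 (fun y => M y i j) x) (hdet : (M x).det ≠ 0)
    (k i r s : n) : DifferentiableAt 𝕜 (fun y => (M y).adjugatePartial k i r s) x := by
  have hadj := DifferentiableAt.matrix_adjugate hM
  exact ((matrix_det hM).inv hdet).mul (((hadj s r).mul (hadj k i)).sub ((hadj s i).mul (hadj k r)))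

lemma HasDerivAt.matrix_adjugate_fin_three {A : 𝕜 → Matrix (Fin 3) (Fin 3) 𝕜}
    {A' : Matrix (Fin 3) (Fin 3) 𝕜} {t : 𝕜} (hA : ∀ r s, HasDerivAt (fun τ => A τ r s) (A' r s) t)
    (hdet : (A t).det ≠ 0) (k i : Fin 3) :
    HasDerivAt (fun τ => (A τ).adjugate k i)
      (∑ r, ∑ s, A' r s * (A t).adjugatePartial k i r s) t := by
  simp only [adjugate_fin_three_apply_cyclic, sum_mul_adjugatePartial_fin_three _ _ hdet]
  exact ((hA _ _).mul (hA _ _)).sub ((hA _ _).mul (hA _ _))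

end MatrixCalculus

section Slices

variable {E F : Type*} [NormedAddCommGroup E] [NormedSpace ℝ E] [NormedAddCommGroup F]
  [NormedSpace ℝ F] {f : ℝ × E → F} {t : ℝ} {y : E}

lemma fderiv_comp_prodMk_right_apply (hf : DifferentiableAt ℝ f (t, y)) (w : E) :
    fderiv ℝ (fun y' => f (t, y')) y w = fderiv ℝ f (t, y) (0, w) := by
  have h : HasFDerivAt (fun y' => f (t, y'))
      ((fderiv ℝ f (t, y)).comp (ContinuousLinearMap.inr ℝ ℝ E)) y :=
    hf.hasFDerivAt.comp y (hasFDerivAt_prodMk_right t y)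
  rw [h.fderiv]
  rfl

lemma deriv_comp_prodMk_left (hf : DifferentiableAt ℝ f (t, y)) :
    deriv (fun τ => f (τ, y)) t = fderiv ℝ f (t, y) (1, 0) := by
  have h : HasDerivAt (fun τ => f (τ, y)) (fderiv ℝ f (t, y) (1, 0)) t :=
    (hf.hasFDerivAt.comp t (hasFDerivAt_prodMk_left (𝕜 := ℝ) t y)).hasDerivAt
  exact h.deriv

lemma contDiff_deriv_comp_prodMk_left {n m : WithTop ℕ∞} (hf : ContDiff ℝ n f)
    (hmn : m + 1 ≤ n) (t : ℝ) : ContDiff ℝ m (fun y => deriv (fun τ => f (τ, y)) t) := by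
  have hdf : Differentiable ℝ f := hf.differentiable (ne_bot_of_le_ne_bot (by simp) hmn)
  simp only [deriv_comp_prodMk_left (hdf _)]
  exact ((hf.fderiv_right hmn).clm_apply contDiff_const).comp (contDiff_const.prodMk contDiff_id)

/-- `∂ₜ ∂_w f = ∂_w ∂ₜ f`, by the symmetry of the second derivative. -/
lemma hasDerivAt_fderiv_comp_prodMk_right (hf : ContDiff ℝ 2 f) (t : ℝ) (y w : E) :
    HasDerivAt (fun τ => fderiv ℝ (fun y' => f (τ, y')) y w)
      (fderiv ℝ (fun y' => deriv (fun τ => f (τ, y')) t) y w) t := by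
  have hdf : Differentiable ℝ f := hf.differentiable (by norm_num)
  have hd2 : Differentiable ℝ (fderiv ℝ f) :=
    (hf.fderiv_right (m := 1) (by norm_num)).differentiable one_ne_zero
  simp only [fderiv_comp_prodMk_right_apply (hdf _), deriv_comp_prodMk_left (hdf _)]
  have hτ : HasDerivAt (fun τ => fderiv ℝ f (τ, y) (0, w))
      (fderiv ℝ (fun p => fderiv ℝ f p (0, w)) (t, y) (1, 0)) t :=
    ((hd2.clm_apply (differentiable_const _)) (t, y)).hasFDerivAt.comp_hasDerivAt
      (l := fun p => fderiv ℝ f p (0, w)) t ((hasDerivAt_id' t).prodMk (hasDerivAt_const t y))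
  rw [fderiv_comp_prodMk_right_apply ((hd2.clm_apply (differentiable_const _)) (t, y))]
  convert hτ using 1
  rw [fderiv_clm_apply (hd2 _) (differentiableAt_const _),
    fderiv_clm_apply (hd2 _) (differentiableAt_const _)]
  simpa using (hf.contDiffAt.isSymmSndFDerivAt (by simp)).eq (0, w) (1, 0)

end Slices

section PartialDerivatives

variable {f g : (Fin 3 → ℝ) → ℝ} {x : Fin 3 → ℝ}

lemma contDiff_p1 {n m : WithTop ℕ∞} (hf : ContDiff ℝ n f) (hmn : m + 1 ≤ n) (j : Fin 3) :
    ContDiff ℝ m (p1 j f) :=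
  (hf.fderiv_right hmn).clm_apply contDiff_const

lemma Filter.EventuallyEq.p1_eq (h : f =ᶠ[nhds x] g) (j : Fin 3) : p1 j f x = p1 j g x := by
  simp only [p1, h.fderiv_eq]

lemma p1_sum {ι : Type*} (s : Finset ι) {u : ι → (Fin 3 → ℝ) → ℝ}
    (hu : ∀ r ∈ s, DifferentiableAt ℝ (u r) x) (j : Fin 3) :
    p1 j (fun y => ∑ r ∈ s, u r y) x = ∑ r ∈ s, p1 j (u r) x := by
  simp [p1, fderiv_fun_sum hu]

lemma p1_mul (hf : DifferentiableAt ℝ f x) (hg : DifferentiableAt ℝ g x) (j : Fin 3) :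
    p1 j (fun y => f y * g y) x = p1 j f x * g x + f x * p1 j g x := by
  simp only [p1, fderiv_fun_mul hf hg, _root_.add_apply, _root_.smul_apply,
    smul_eq_mul]
  ring

lemma p1_sum_sum_mul {ι κ : Type*} [Fintype ι] [Fintype κ] {f g : ι → κ → (Fin 3 → ℝ) → ℝ}
    (hf : ∀ r s, DifferentiableAt ℝ (f r s) x) (hg : ∀ r s, DifferentiableAt ℝ (g r s) x)
    (j : Fin 3) :
    p1 j (fun y => ∑ r, ∑ s, f r s y * g r s y) x =
      ∑ r, ∑ s, (p1 j (f r s) x * g r s x + f r s x * p1 j (g r s) x) := by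
  rw [p1_sum _ fun r _ => DifferentiableAt.fun_sum fun s _ => (hf r s).fun_mul (hg r s)]
  refine Finset.sum_congr rfl fun r _ => ?_
  rw [p1_sum _ fun s _ => (hf r s).fun_mul (hg r s)]
  exact Finset.sum_congr rfl fun s _ => p1_mul (hf r s) (hg r s) j

end PartialDerivatives

section Flow

variable {η : ℝ → (Fin 3 → ℝ) → (Fin 3 → ℝ)}

lemma differentiable_sjac_apply (hη : ContDiff ℝ 2 (fun p : ℝ × (Fin 3 → ℝ) => η p.1 p.2))
    (t : ℝ) (r s : Fin 3) : Differentiable ℝ (fun y => sjac (η t) y r s) :=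
  (contDiff_p1 ((contDiff_pi.mp hη r).comp (contDiff_const.prodMk contDiff_id)) (m := 1)
    (by norm_num) s).differentiable one_ne_zero

lemma differentiable_p1_vel (hη : ContDiff ℝ 3 (fun p : ℝ × (Fin 3 → ℝ) => η p.1 p.2))
    (t : ℝ) (r s : Fin 3) : Differentiable ℝ (p1 s fun y => vel η t y r) :=
  (contDiff_p1 (contDiff_deriv_comp_prodMk_left (contDiff_pi.mp hη r) (m := 2) (by norm_num) t)
    (m := 1) (by norm_num) s).differentiable one_ne_zero

lemma hasDerivAt_sjac_apply (hη : ContDiff ℝ 2 (fun p : ℝ × (Fin 3 → ℝ) => η p.1 p.2))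
    (t : ℝ) (y : Fin 3 → ℝ) (r s : Fin 3) :
    HasDerivAt (fun τ => sjac (η τ) y r s) (p1 s (fun y => vel η t y r) y) t :=
  hasDerivAt_fderiv_comp_prodMk_right (contDiff_pi.mp hη r) t y _

lemma deriv_adjugate_sjac (hη : ContDiff ℝ 2 (fun p : ℝ × (Fin 3 → ℝ) => η p.1 p.2))
    {t : ℝ} {y : Fin 3 → ℝ} (hdet : (sjac (η t) y).det ≠ 0) (k i : Fin 3) :
    deriv (fun τ => (sjac (η τ) y).adjugate k i) t =
      ∑ r, ∑ s, p1 s (fun y => vel η t y r) y * (sjac (η t) y).adjugatePartial k i r s :=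
  (HasDerivAt.matrix_adjugate_fin_three (hasDerivAt_sjac_apply hη t y) hdet k i).deriv

end Flow

lemma kd_contraction_eq_curl_curl (P : Fin 3 → Fin 3 → Fin 3 → ℝ) (k : Fin 3) :
    ∑ r, ∑ s, ∑ j, ∑ i, P j s r * ((kd s r * kd k i - kd s i * kd k r) * kd j i)
      = ∑ m, P k m m - ∑ m, P m m k := by
  simp [kd, mul_sub, Finset.sum_sub_distrib]

lemma curl_curl_rearrange (P : Fin 3 → Fin 3 → Fin 3 → ℝ) (b : Fin 3 → Fin 3 → ℝ)
    (A : Fin 3 → Fin 3 → Fin 3 → ℝ) (dA : Fin 3 → Fin 3 → Fin 3 → Fin 3 → ℝ)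
    (a : Fin 3 → Fin 3 → ℝ) (k : Fin 3) :
    ∑ i, ∑ j, (∑ r, ∑ s, (P j s r * A i r s + b s r * dA j i r s)) * a j i
      = (∑ m, P k m m - ∑ m, P m m k)
        + ∑ r, ∑ s, ∑ j, ∑ i,
            P j s r * (A i r s * a j i - (kd s r * kd k i - kd s i * kd k r) * kd j i)
        + ∑ r, ∑ s, ∑ j, ∑ i, b s r * dA j i r s * a j i := by
  rw [← kd_contraction_eq_curl_curl P k]
  simp only [Fin.sum_univ_three]
  ring

/-- The curl–curl structure identity (Lemma 5.1): with `v = ∂ₜη`, `J = det Dη`,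
`a = adj Dη`, at every point of an open set where `Dη` is invertible,
`∂_j(∂ₜ a^k_i) a^j_i = [curl curl v]^k
  + v^r,_{sj} (J⁻¹[a^s_r a^k_i − a^s_i a^k_r] a^j_i − [δ^s_r δ^k_i − δ^s_i δ^k_r]δ^j_i)
  + v^r,_s (J⁻¹[a^s_r a^k_i − a^s_i a^k_r]),_j a^j_i`. -/
theorem curl_curl_structure (η : ℝ → (Fin 3 → ℝ) → (Fin 3 → ℝ))
    (hη : ContDiff ℝ 3 (fun p : ℝ × (Fin 3 → ℝ) => η p.1 p.2))
    (V : Set (ℝ × (Fin 3 → ℝ))) (hV : IsOpen V)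
    (hinv : ∀ p ∈ V, (sjac (η p.1) p.2).det ≠ 0) :
    ∀ t : ℝ, ∀ x : Fin 3 → ℝ, (t, x) ∈ V → ∀ k : Fin 3,
      (∑ i : Fin 3, ∑ j : Fin 3,
          p1 j (fun y => deriv (fun s => (sjac (η s) y).adjugate k i) t) x
            * (sjac (η t) x).adjugate j i)
        =
        ((∑ m : Fin 3, p1 k (p1 m (fun y => vel η t y m)) x)
            - ∑ m : Fin 3, p1 m (p1 m (fun y => vel η t y k)) x)
        + (∑ r : Fin 3, ∑ s : Fin 3, ∑ j : Fin 3, ∑ i : Fin 3,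
            p1 j (p1 s (fun y => vel η t y r)) x *
              (((sjac (η t) x).det)⁻¹
                  * ((sjac (η t) x).adjugate s r * (sjac (η t) x).adjugate k i
                      - (sjac (η t) x).adjugate s i * (sjac (η t) x).adjugate k r)
                  * (sjac (η t) x).adjugate j i
                - (kd s r * kd k i - kd s i * kd k r) * kd j i))
        + ∑ r : Fin 3, ∑ s : Fin 3, ∑ j : Fin 3, ∑ i : Fin 3,
            p1 s (fun y => vel η t y r) x *
              p1 j (fun y => ((sjac (η t) y).det)⁻¹
                  * ((sjac (η t) y).adjugate s r * (sjac (η t) y).adjugate k i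
                      - (sjac (η t) y).adjugate s i * (sjac (η t) y).adjugate k r)) x *
              (sjac (η t) x).adjugate j i := by
  intro t x hx k
  have hη2 : ContDiff ℝ 2 (fun p : ℝ × (Fin 3 → ℝ) => η p.1 p.2) := hη.of_le (by norm_num)
  have hA : ∀ i r s, DifferentiableAt ℝ (fun y => (sjac (η t) y).adjugatePartial k i r s) x :=
    DifferentiableAt.matrix_adjugatePartial (fun r s => differentiable_sjac_apply hη2 t r s x)
      (hinv _ hx) k
  have hdt : ∀ i, (fun y => deriv (fun τ => (sjac (η τ) y).adjugate k i) t) =ᶠ[nhds x]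
      fun y => ∑ r, ∑ s,
        p1 s (fun y => vel η t y r) y * (sjac (η t) y).adjugatePartial k i r s := by
    intro i
    filter_upwards [(hV.preimage (by fun_prop)).mem_nhds hx] with y hy
    exact deriv_adjugate_sjac hη2 (hinv _ hy) k i
  have hdx : ∀ i j, p1 j (fun y => deriv (fun τ => (sjac (η τ) y).adjugate k i) t) x =
      ∑ r, ∑ s, (p1 j (p1 s fun y => vel η t y r) x * (sjac (η t) x).adjugatePartial k i r s
        + p1 s (fun y => vel η t y r) x
          * p1 j (fun y => (sjac (η t) y).adjugatePartial k i r s) x) := fun i j => by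
    rw [(hdt i).p1_eq, p1_sum_sum_mul (fun r s => differentiable_p1_vel hη t r s x) (hA i)]
  simp only [hdx]
  exact curl_curl_rearrange (fun j s r => p1 j (p1 s fun y => vel η t y r) x)
    (fun s r => p1 s (fun y => vel η t y r) x) (fun i r s => (sjac (η t) x).adjugatePartial k i r s)
    (fun j i r s => p1 j (fun y => (sjac (η t) y).adjugatePartial k i r s) x)
    (sjac (η t) x).adjugate k
end

section
/- One-dimensional weighted elliptic estimate underlying the normal-derivative bounds. Let ρ : [0,1] → ℝ be of class C² with ρ(x) > 0 for 0 < x < 1, ρ(0) = ρ(1) = 0, ρ'(0) > 0 and ρ'(1) < 0. Then there exists a constant C > 0 (depending only on ρ) such that for every w : [0,1] → ℝ of class C¹: ∫₀¹ ρ(x)² |w'(x)|² dx + ∫₀¹ |w(x)|² dx ≤ C · ( ∫₀¹ | ρ(x) w'(x) + 2 ρ'(x) w(x) |² dx + ∫₀¹ ρ(x) |w(x)|² dx ). -/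
/-!
Expanding the square and writing the cross term as
`4 ρ ρ' w w' = 2 (ρ ρ' w²)' - 2 (ρ'² + ρ ρ'') w²`, the exact derivative integrates to zero since `ρ`
vanishes at both ends, so `∫ (ρ w' + 2 ρ' w)² = ∫ ρ² w'² + 2 ∫ ρ'² w² - 2 ∫ ρ ρ'' w²`.
The last integral is at most `sup ρ'' · ∫ ρ w²`, which controls `∫ ρ² w'²` and `∫ ρ'² w²`.
Finally `ρ'² + ρ` is bounded below by some `c > 0` on `[0, 1]`, because `ρ'` does not vanish
where `ρ` does, so `c ∫ w² ≤ ∫ ρ'² w² + ∫ ρ w²`.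
-/

open Set MeasureTheory

lemma IsCompact.exists_pos_le_of_continuousOn {α : Type*} [TopologicalSpace α] {K : Set α}
    {f : α → ℝ} (hK : IsCompact K) (hf : ContinuousOn f K) (hpos : ∀ x ∈ K, 0 < f x) :
    ∃ c > 0, ∀ x ∈ K, c ≤ f x := by
  rcases K.eq_empty_or_nonempty with rfl | hne
  · exact ⟨1, one_pos, by simp⟩
  obtain ⟨z, hz, hmin⟩ := hK.exists_isMinOn hne hf
  exact ⟨f z, hpos z hz, fun x hx => hmin hx⟩

section WeightedOperator

variable {a b : ℝ} {ρ w : ℝ → ℝ}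

lemma ContinuousOn.integrableOn_Ioo {f : ℝ → ℝ} (hf : ContinuousOn f (Icc a b)) :
    IntegrableOn f (Ioo a b) :=
  hf.integrableOn_Icc.mono_set Ioo_subset_Icc_self

lemma integral_Ioo_derivWithin_eq_sub {F : ℝ → ℝ} (hab : a ≤ b)
    (hF : ContDiffOn ℝ 1 F (Icc a b)) :
    ∫ x in Ioo a b, derivWithin F (Icc a b) x = F b - F a := by
  rw [← integral_Ioc_eq_integral_Ioo, ← intervalIntegral.integral_of_le hab,
    intervalIntegral.integral_derivWithin_Icc_of_contDiffOn_Icc hF hab]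

lemma integral_sq_weighted_op_eq (hab : a < b) (hρ : ContDiffOn ℝ 2 ρ (Icc a b))
    (hw : ContDiffOn ℝ 1 w (Icc a b)) (ha : ρ a = 0) (hb : ρ b = 0) :
    ∫ x in Ioo a b,
        (ρ x * derivWithin w (Icc a b) x + 2 * derivWithin ρ (Icc a b) x * w x) ^ 2 =
      (∫ x in Ioo a b, ρ x ^ 2 * derivWithin w (Icc a b) x ^ 2)
        + 2 * (∫ x in Ioo a b, derivWithin ρ (Icc a b) x ^ 2 * w x ^ 2)
        - 2 * ∫ x in Ioo a b,
            ρ x * derivWithin (derivWithin ρ (Icc a b)) (Icc a b) x * w x ^ 2 := by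
  have hu := uniqueDiffOn_Icc hab
  set ρ' := derivWithin ρ (Icc a b)
  set ρ'' := derivWithin ρ' (Icc a b)
  set w' := derivWithin w (Icc a b)
  have hρ1 : ContDiffOn ℝ 1 ρ (Icc a b) := hρ.of_le one_le_two
  have hρ' : ContDiffOn ℝ 1 ρ' (Icc a b) := hρ.derivWithin hu (by norm_num)
  set F := fun x => ρ x * ρ' x * w x ^ 2
  have hF : ContDiffOn ℝ 1 F (Icc a b) := (hρ1.mul hρ').mul (hw.pow 2)
  have hF' : ∀ x ∈ Icc a b, derivWithin F (Icc a b) x =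
      (ρ' x ^ 2 + ρ x * ρ'' x) * w x ^ 2 + 2 * ρ x * ρ' x * w x * w' x := by
    intro x hx
    have hasDeriv : ∀ f : ℝ → ℝ, ContDiffOn ℝ 1 f (Icc a b) →
        HasDerivWithinAt f (derivWithin f (Icc a b) x) (Icc a b) x :=
      fun f hf => ((hf.differentiableOn one_ne_zero) x hx).hasDerivWithinAt
    have hF_deriv := ((hasDeriv ρ hρ1).mul (hasDeriv ρ' hρ')).mul ((hasDeriv w hw).pow 2)
    refine (hF_deriv.derivWithin (hu x hx)).trans ?_
    simp only [Pi.mul_apply, Pi.pow_apply, ρ', ρ'', w']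
    ring
  have cρ : ContinuousOn ρ (Icc a b) := hρ1.continuousOn
  have cρ' : ContinuousOn ρ' (Icc a b) := hρ'.continuousOn
  have cρ'' : ContinuousOn ρ'' (Icc a b) := hρ'.continuousOn_derivWithin hu le_rfl
  have cw : ContinuousOn w (Icc a b) := hw.continuousOn
  have cw' : ContinuousOn w' (Icc a b) := hw.continuousOn_derivWithin hu le_rfl
  have cF' : ContinuousOn (derivWithin F (Icc a b)) (Icc a b) :=
    hF.continuousOn_derivWithin hu le_rfl
  have i1 : IntegrableOn (fun x => ρ x ^ 2 * w' x ^ 2) (Ioo a b) :=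
    ContinuousOn.integrableOn_Ioo (by fun_prop)
  have i2 : IntegrableOn (fun x => ρ' x ^ 2 * w x ^ 2) (Ioo a b) :=
    ContinuousOn.integrableOn_Ioo (by fun_prop)
  have i3 : IntegrableOn (fun x => ρ x * ρ'' x * w x ^ 2) (Ioo a b) :=
    ContinuousOn.integrableOn_Ioo (by fun_prop)
  have iF : IntegrableOn (derivWithin F (Icc a b)) (Ioo a b) := cF'.integrableOn_Ioo
  calc _ = ∫ x in Ioo a b, ((ρ x ^ 2 * w' x ^ 2 + 2 * (ρ' x ^ 2 * w x ^ 2)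
          - 2 * (ρ x * ρ'' x * w x ^ 2)) + 2 * derivWithin F (Icc a b) x) :=
        setIntegral_congr_fun measurableSet_Ioo fun x hx => by
          simp only [hF' x (Ioo_subset_Icc_self hx)]; ring
    _ = _ := by
      rw [integral_add _ (iF.const_mul 2), integral_sub _ (i3.const_mul 2),
        integral_add i1 (i2.const_mul 2), integral_const_mul, integral_const_mul,
        integral_const_mul, integral_Ioo_derivWithin_eq_sub hab.le hF]
      · simp [F, ha, hb]
      · exact i1.add (i2.const_mul 2)
      · exact (i1.add (i2.const_mul 2)).sub (i3.const_mul 2)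

lemma integral_sq_mul_sq_add_integral_sq_le (hab : a < b) (hρ : ContDiffOn ℝ 2 ρ (Icc a b))
    (hw : ContDiffOn ℝ 1 w (Icc a b)) (ha : ρ a = 0) (hb : ρ b = 0)
    (hρ_nonneg : ∀ x ∈ Ioo a b, 0 ≤ ρ x) {M c : ℝ} (hM : 0 ≤ M)
    (hρ''_le : ∀ x ∈ Ioo a b, derivWithin (derivWithin ρ (Icc a b)) (Icc a b) x ≤ M)
    (hc : 0 < c) (hc_le : ∀ x ∈ Ioo a b, c ≤ derivWithin ρ (Icc a b) x ^ 2 + ρ x) :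
    (∫ x in Ioo a b, ρ x ^ 2 * derivWithin w (Icc a b) x ^ 2) + ∫ x in Ioo a b, w x ^ 2
      ≤ (1 + 1 / c) * (1 + 2 * M) *
        ((∫ x in Ioo a b,
            (ρ x * derivWithin w (Icc a b) x + 2 * derivWithin ρ (Icc a b) x * w x) ^ 2)
          + ∫ x in Ioo a b, ρ x * w x ^ 2) := by
  have hu := uniqueDiffOn_Icc hab
  have key := integral_sq_weighted_op_eq hab hρ hw ha hb
  set ρ' := derivWithin ρ (Icc a b)
  set ρ'' := derivWithin ρ' (Icc a b)
  set w' := derivWithin w (Icc a b)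
  have hρ' : ContDiffOn ℝ 1 ρ' (Icc a b) := hρ.derivWithin hu (by norm_num)
  have cρ : ContinuousOn ρ (Icc a b) := hρ.continuousOn
  have cρ' : ContinuousOn ρ' (Icc a b) := hρ'.continuousOn
  have cρ'' : ContinuousOn ρ'' (Icc a b) := hρ'.continuousOn_derivWithin hu le_rfl
  have cw : ContinuousOn w (Icc a b) := hw.continuousOn
  have iP : IntegrableOn (fun x => ρ x * w x ^ 2) (Ioo a b) :=
    ContinuousOn.integrableOn_Ioo (by fun_prop)
  have i2 : IntegrableOn (fun x => ρ' x ^ 2 * w x ^ 2) (Ioo a b) :=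
    ContinuousOn.integrableOn_Ioo (by fun_prop)
  have hZ : ∫ x in Ioo a b, ρ x * ρ'' x * w x ^ 2 ≤ M * ∫ x in Ioo a b, ρ x * w x ^ 2 := by
    rw [← integral_const_mul]
    refine setIntegral_mono_on (ContinuousOn.integrableOn_Ioo (by fun_prop)) (iP.const_mul M)
      measurableSet_Ioo fun x hx => ?_
    have := mul_le_mul_of_nonneg_left (hρ''_le x hx) (mul_nonneg (hρ_nonneg x hx) (sq_nonneg (w x)))
    linarith
  have hW : c * ∫ x in Ioo a b, w x ^ 2 ≤
      (∫ x in Ioo a b, ρ' x ^ 2 * w x ^ 2) + ∫ x in Ioo a b, ρ x * w x ^ 2 := by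
    rw [← integral_const_mul, ← integral_add i2 iP]
    refine setIntegral_mono_on (ContinuousOn.integrableOn_Ioo (by fun_prop)) (i2.add iP)
      measurableSet_Ioo fun x hx => ?_
    have := mul_le_mul_of_nonneg_right (hc_le x hx) (sq_nonneg (w x))
    linarith
  have nonneg : ∀ f : ℝ → ℝ, (∀ x ∈ Ioo a b, 0 ≤ f x) → 0 ≤ ∫ x in Ioo a b, f x :=
    fun f hf => setIntegral_nonneg measurableSet_Ioo hf
  have hD := nonneg _ fun x _ => sq_nonneg (ρ x * w' x + 2 * ρ' x * w x)
  have hA1 := nonneg _ fun x _ => mul_nonneg (sq_nonneg (ρ x)) (sq_nonneg (w' x))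
  have hA2 := nonneg _ fun x _ => mul_nonneg (sq_nonneg (ρ' x)) (sq_nonneg (w x))
  have hP := nonneg _ fun x hx => mul_nonneg (hρ_nonneg x hx) (sq_nonneg (w x))
  generalize (∫ x in Ioo a b, ρ x ^ 2 * w' x ^ 2) = A1 at *
  generalize (∫ x in Ioo a b, ρ' x ^ 2 * w x ^ 2) = A2 at *
  generalize (∫ x in Ioo a b, ρ x * ρ'' x * w x ^ 2) = Z at *
  generalize (∫ x in Ioo a b, w x ^ 2) = W at *
  generalize (∫ x in Ioo a b, ρ x * w x ^ 2) = P at *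
  generalize (∫ x in Ioo a b, (ρ x * w' x + 2 * ρ' x * w x) ^ 2) = D at *
  have hA1D : A1 ≤ D + 2 * M * P + P := by linarith
  have hWD : W ≤ (D + 2 * M * P + P) / c := by rw [le_div_iff₀ hc]; linarith
  have hDP : D + 2 * M * P + P ≤ (1 + 2 * M) * (D + P) := by nlinarith
  calc A1 + W ≤ (1 + 1 / c) * (D + 2 * M * P + P) := by
        rw [one_add_mul, one_div_mul_eq_div]; exact add_le_add hA1D hWD
    _ ≤ (1 + 1 / c) * ((1 + 2 * M) * (D + P)) := by gcongr
    _ = (1 + 1 / c) * (1 + 2 * M) * (D + P) := (mul_assoc _ _ _).symm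

lemma sq_derivWithin_add_pos (hρ_pos : ∀ x ∈ Ioo a b, 0 < ρ x) (ha : ρ a = 0) (hb : ρ b = 0)
    (ha' : derivWithin ρ (Icc a b) a ≠ 0) (hb' : derivWithin ρ (Icc a b) b ≠ 0) :
    ∀ x ∈ Icc a b, 0 < derivWithin ρ (Icc a b) x ^ 2 + ρ x := by
  rintro x ⟨hax, hxb⟩
  rcases hax.eq_or_lt with rfl | hax
  · rw [ha, add_zero]; positivity
  rcases hxb.eq_or_lt with rfl | hxb
  · rw [hb, add_zero]; positivity
  exact add_pos_of_nonneg_of_pos (sq_nonneg _) (hρ_pos x ⟨hax, hxb⟩)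

end WeightedOperator

/-- One-dimensional weighted elliptic estimate underlying the normal-derivative
bounds: for `ρ` of class `C²` on `[0,1]`, positive in `(0,1)`, vanishing at the
endpoints with `ρ'(0) > 0` and `ρ'(1) < 0`, there is `C > 0` such that for every
`C¹` function `w` on `[0,1]`,
`∫ ρ² |w'|² + ∫ |w|² ≤ C (∫ |ρ w' + 2 ρ' w|² + ∫ ρ |w|²)`. -/
theorem one_dim_weighted_elliptic (ρ : ℝ → ℝ)
    (hρ : ContDiffOn ℝ 2 ρ (Icc (0:ℝ) 1))
    (hρpos : ∀ x ∈ Ioo (0:ℝ) 1, 0 < ρ x)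
    (hρ0 : ρ 0 = 0) (hρ1 : ρ 1 = 0)
    (hρ'0 : 0 < derivWithin ρ (Icc (0:ℝ) 1) 0)
    (hρ'1 : derivWithin ρ (Icc (0:ℝ) 1) 1 < 0) :
    ∃ C > 0, ∀ w : ℝ → ℝ, ContDiffOn ℝ 1 w (Icc (0:ℝ) 1) →
      (∫ x in Ioo (0:ℝ) 1, (ρ x) ^ 2 * (derivWithin w (Icc (0:ℝ) 1) x) ^ 2)
          + ∫ x in Ioo (0:ℝ) 1, (w x) ^ 2
        ≤ C * ((∫ x in Ioo (0:ℝ) 1,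
              (ρ x * derivWithin w (Icc (0:ℝ) 1) x
                + 2 * derivWithin ρ (Icc (0:ℝ) 1) x * w x) ^ 2)
            + ∫ x in Ioo (0:ℝ) 1, ρ x * (w x) ^ 2) := by
  have hu : UniqueDiffOn ℝ (Icc (0:ℝ) 1) := uniqueDiffOn_Icc zero_lt_one
  have hρ' : ContDiffOn ℝ 1 (derivWithin ρ (Icc (0:ℝ) 1)) (Icc (0:ℝ) 1) :=
    hρ.derivWithin hu (by norm_num)
  obtain ⟨M, hM⟩ :=
    isCompact_Icc.exists_bound_of_continuousOn (hρ'.continuousOn_derivWithin hu le_rfl)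
  have hM_nonneg : 0 ≤ M := (abs_nonneg _).trans (hM 0 (left_mem_Icc.2 zero_le_one))
  obtain ⟨c, hc, hc_le⟩ := isCompact_Icc.exists_pos_le_of_continuousOn
    ((hρ'.continuousOn.pow 2).add hρ.continuousOn)
    (sq_derivWithin_add_pos hρpos hρ0 hρ1 hρ'0.ne' hρ'1.ne)
  refine ⟨(1 + 1 / c) * (1 + 2 * M), by positivity, fun w hw => ?_⟩
  exact integral_sq_mul_sq_add_integral_sq_le zero_lt_one hρ hw hρ0 hρ1
    (fun x hx => (hρpos x hx).le) hM_nonneg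
    (fun x hx => (le_abs_self _).trans (hM x (Ioo_subset_Icc_self hx))) hc
    (fun x hx => hc_le x (Ioo_subset_Icc_self hx))
end

section
/- Convergence of the three-step iteration scheme (the modified contraction argument used to produce the fixed point of the map Θ). Let (X, dist) be a complete metric space, let (x_n)_{n ≥ 0} be a sequence in X, and set b_n = dist(x_{n+1}, x_n)². Let m ≥ 1, a₁, …, a_m ≥ 0, P(z) = Σ_{j=1}^{m} a_j z^j, θ ≥ 0 and B > 0. Assume: (i) b₀ ≤ B, b₁ ≤ B, b₂ ≤ B; (ii) 3 θ · Σ_{j=1}^{m} a_j B^{j−1} ≤ 1/2; and (iii) b_{n+1} ≤ θ · ( P(b_n) + P(b_{n−1}) + P(b_{n−2}) ) for every n ≥ 2. Then b_n ≤ B for all n, Σ_{n ≥ 0} dist(x_{n+1}, x_n) < ∞, and the sequence (x_n) converges in X. -/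
set_option maxHeartbeats 1000000


/-- Convergence of the three-step iteration scheme (the modified contraction
argument used to produce the fixed point of the map Θ): if `b n = dist(x(n+1), x n)²`
satisfies `b 0, b 1, b 2 ≤ B`, `3θ Σ_{j=1}^m a_j B^{j−1} ≤ 1/2`, and
`b(n+1) ≤ θ (P(b n) + P(b(n−1)) + P(b(n−2)))` for `n ≥ 2`, where
`P(z) = Σ_{j=1}^m a_j z^j` has nonnegative coefficients, then `b n ≤ B` for all `n`,
`Σ dist(x(n+1), x n) < ∞`, and `x` converges. -/
theorem three_step_iteration {X : Type*} [MetricSpace X] [CompleteSpace X]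
    (x : ℕ → X) (b : ℕ → ℝ)
    (hb : ∀ n, b n = dist (x (n+1)) (x n) ^ 2)
    (m : ℕ) (hm : 1 ≤ m) (a : ℕ → ℝ) (ha : ∀ j ∈ Finset.Icc 1 m, 0 ≤ a j)
    (θ B : ℝ) (hθ : 0 ≤ θ) (hB : 0 < B)
    (h0 : b 0 ≤ B) (h1 : b 1 ≤ B) (h2 : b 2 ≤ B)
    (hsmall : 3 * θ * ∑ j ∈ Finset.Icc 1 m, a j * B ^ (j - 1) ≤ 1/2)
    (hrec : ∀ n, 2 ≤ n →
      b (n+1) ≤ θ * ((∑ j ∈ Finset.Icc 1 m, a j * b n ^ j)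
        + (∑ j ∈ Finset.Icc 1 m, a j * b (n-1) ^ j)
        + ∑ j ∈ Finset.Icc 1 m, a j * b (n-2) ^ j)) :
    (∀ n, b n ≤ B) ∧ Summable (fun n => dist (x (n+1)) (x n))
      ∧ ∃ l : X, Filter.Tendsto x Filter.atTop (nhds l) := by
  set C : ℝ := ∑ j ∈ Finset.Icc 1 m, a j * B ^ (j - 1) with hC
  have hbnn : ∀ n, 0 ≤ b n := fun n => (hb n) ▸ sq_nonneg _
  have hCnn : 0 ≤ C := by
    apply Finset.sum_nonneg
    intro j hj
    exact mul_nonneg (ha j hj) (pow_nonneg hB.le _)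
  have hθC : θ * C ≤ 1/6 := by nlinarith
  -- Key polynomial lemma: P(z) ≤ C z for 0 ≤ z ≤ B
  have hP : ∀ z : ℝ, 0 ≤ z → z ≤ B →
      (∑ j ∈ Finset.Icc 1 m, a j * z ^ j) ≤ C * z := by
    intro z hz hzB
    rw [hC, Finset.sum_mul]
    apply Finset.sum_le_sum
    intro j hj
    have hj1 : 1 ≤ j := (Finset.mem_Icc.mp hj).1
    have : z ^ j = z ^ (j - 1) * z := by
      conv_lhs => rw [show j = (j - 1) + 1 by omega]
      rw [pow_succ]
    rw [this, mul_assoc]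
    apply mul_le_mul_of_nonneg_left _ (ha j hj)
    exact mul_le_mul_of_nonneg_right (pow_le_pow_left₀ hz hzB _) hz
  -- strong induction: b n ≤ B and b n ≤ 25/16 * B * (4/5)^n
  have key : ∀ n, b n ≤ B ∧ b n ≤ 25/16 * B * (4/5 : ℝ) ^ n := by
    intro n
    induction n using Nat.strong_induction_on with
    | _ n ih =>
      match n, ih with
      | 0, _ => exact ⟨h0, by nlinarith⟩
      | 1, _ => refine ⟨h1, ?_⟩; norm_num; nlinarith
      | 2, _ => refine ⟨h2, ?_⟩; norm_num; nlinarith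
      | (k+3), ih =>
        have hk2 : 2 ≤ k + 2 := by omega
        have h := hrec (k+2) hk2
        have e1 : k + 2 - 1 = k + 1 := by omega
        have e2 : k + 2 - 2 = k := by omega
        rw [e1, e2] at h
        have i0 := ih k (by omega)
        have i1 := ih (k+1) (by omega)
        have i2 := ih (k+2) (by omega)
        have p0 := hP (b k) (hbnn k) i0.1
        have p1 := hP (b (k+1)) (hbnn (k+1)) i1.1
        have p2 := hP (b (k+2)) (hbnn (k+2)) i2.1
        have hsum : b (k+3) ≤ θ * C * (b (k+2) + b (k+1) + b k) := by nlinarith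
        have hgeo : b (k+2) + b (k+1) + b k ≤
            25/16 * B * (4/5 : ℝ) ^ k * (16/25 + 4/5 + 1) := by
          have := i0.2
          have := i1.2
          have := i2.2
          have e3 : (4/5 : ℝ) ^ (k+1) = (4/5 : ℝ) ^ k * (4/5) := pow_succ _ _
          have e4 : (4/5 : ℝ) ^ (k+2) = (4/5 : ℝ) ^ k * (16/25) := by
            rw [pow_add]; ring
          nlinarith
        have hpow : (0:ℝ) ≤ (4/5 : ℝ) ^ k := by positivity
        have hpow1 : (4/5 : ℝ) ^ k ≤ 1 := pow_le_one₀ (by norm_num) (by norm_num)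
        have hθCnn : 0 ≤ θ * C := mul_nonneg hθ hCnn
        have hmain : b (k+3) ≤ 61/96 * B * (4/5 : ℝ) ^ k := by
          calc b (k+3) ≤ θ * C * (b (k+2) + b (k+1) + b k) := hsum
            _ ≤ θ * C * (25/16 * B * (4/5 : ℝ) ^ k * (16/25 + 4/5 + 1)) := by
                apply mul_le_mul_of_nonneg_left hgeo hθCnn
            _ ≤ 1/6 * (25/16 * B * (4/5 : ℝ) ^ k * (16/25 + 4/5 + 1)) := by
                apply mul_le_mul_of_nonneg_right hθC
                positivity
            _ = 61/96 * B * (4/5 : ℝ) ^ k := by ring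
        constructor
        · calc b (k+3) ≤ 61/96 * B * (4/5 : ℝ) ^ k := hmain
            _ ≤ B := by nlinarith [mul_nonneg hB.le hpow, mul_nonneg hB.le (sub_nonneg.mpr hpow1)]
        · have e5 : (4/5 : ℝ) ^ (k+3) = (4/5 : ℝ) ^ k * (64/125) := by
            rw [pow_add]; ring
          calc b (k+3) ≤ 61/96 * B * (4/5 : ℝ) ^ k := hmain
            _ ≤ 25/16 * B * (4/5 : ℝ) ^ (k+3) := by rw [e5]; nlinarith [mul_nonneg hB.le hpow]
  have hBall : ∀ n, b n ≤ B := fun n => (key n).1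
  refine ⟨hBall, ?_, ?_⟩
  · -- summability
    have hsq : ∀ n, dist (x (n+1)) (x n) ≤
        Real.sqrt (25/16 * B) * Real.sqrt (4/5) ^ n := by
      intro n
      have : dist (x (n+1)) (x n) = Real.sqrt (b n) := by
        rw [hb n, Real.sqrt_sq dist_nonneg]
      have e : (Real.sqrt (25/16 * B) * Real.sqrt (4/5) ^ n) ^ 2
          = 25/16 * B * (4/5 : ℝ) ^ n := by
        rw [mul_pow, ← pow_mul, mul_comm n 2, pow_mul,
          Real.sq_sqrt (by positivity : (0:ℝ) ≤ 25/16 * B),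
          Real.sq_sqrt (by norm_num : (0:ℝ) ≤ (4:ℝ)/5)]
      calc dist (x (n+1)) (x n) = Real.sqrt (b n) := this
        _ ≤ Real.sqrt ((Real.sqrt (25/16 * B) * Real.sqrt (4/5) ^ n) ^ 2) := by
            exact Real.sqrt_le_sqrt (e ▸ (key n).2)
        _ = Real.sqrt (25/16 * B) * Real.sqrt (4/5) ^ n := by
            exact Real.sqrt_sq (by positivity)
    have hgeom : Summable (fun n : ℕ => Real.sqrt (25/16 * B) * Real.sqrt (4/5) ^ n) := by
      apply Summable.mul_left
      apply summable_geometric_of_lt_one (Real.sqrt_nonneg _)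
      rw [show (1:ℝ) = Real.sqrt 1 from (Real.sqrt_one).symm]
      exact Real.sqrt_lt_sqrt (by norm_num) (by norm_num)
    exact Summable.of_nonneg_of_le (fun n => dist_nonneg) hsq hgeom
  · -- convergence
    have hsq : ∀ n, dist (x (n+1)) (x n) ≤
        Real.sqrt (25/16 * B) * Real.sqrt (4/5) ^ n := by
      intro n
      have : dist (x (n+1)) (x n) = Real.sqrt (b n) := by
        rw [hb n, Real.sqrt_sq dist_nonneg]
      have e : (Real.sqrt (25/16 * B) * Real.sqrt (4/5) ^ n) ^ 2
          = 25/16 * B * (4/5 : ℝ) ^ n := by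
        rw [mul_pow, ← pow_mul, mul_comm n 2, pow_mul,
          Real.sq_sqrt (by positivity : (0:ℝ) ≤ 25/16 * B),
          Real.sq_sqrt (by norm_num : (0:ℝ) ≤ (4:ℝ)/5)]
      calc dist (x (n+1)) (x n) = Real.sqrt (b n) := this
        _ ≤ Real.sqrt ((Real.sqrt (25/16 * B) * Real.sqrt (4/5) ^ n) ^ 2) := by
            exact Real.sqrt_le_sqrt (e ▸ (key n).2)
        _ = Real.sqrt (25/16 * B) * Real.sqrt (4/5) ^ n := by
            exact Real.sqrt_sq (by positivity)
    have hgeom : Summable (fun n : ℕ => Real.sqrt (25/16 * B) * Real.sqrt (4/5) ^ n) := by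
      apply Summable.mul_left
      apply summable_geometric_of_lt_one (Real.sqrt_nonneg _)
      rw [show (1:ℝ) = Real.sqrt 1 from (Real.sqrt_one).symm]
      exact Real.sqrt_lt_sqrt (by norm_num) (by norm_num)
    have hsum : Summable (fun n => dist (x n) (x (n+1))) :=
      Summable.of_nonneg_of_le (fun n => dist_nonneg)
        (fun n => by rw [dist_comm]; exact hsq n) hgeom
    have : CauchySeq x := cauchySeq_of_summable_dist hsum
    exact cauchySeq_tendsto_of_complete this
end
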